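/- arXiv:1701.03561 — 4 statements merged into one kernel-verified Lean document; each statement's English description precedes it below -/
import Mathlib

section
/- For every m ∈ ℤ, every p ≥ 1 and every i ≥ 1: if i = p then πₚ(G_m^{[p]}) = G_{m−1}^{[p+1]}, and if i ≠ p then πᵢ(G_m^{[p]}) = −β·G_m^{[p]}. -/
/- Common setup: `R = ℤ[β][[x₀,x₁,x₂,…]]` with `β = Polynomial.X`; only the
variables `x i` for `i ≥ 1` are used in the statements. -/

attribute [local instance] Classical.propDecidable

noncomputable section

abbrev A : Type := Polynomial ℤ
abbrev R : Type := MvPowerSeries ℕ A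

/-- the element β -/
def bR : R := MvPowerSeries.C (σ := ℕ) (R := A) Polynomial.X

/-- the variable `x i` -/
def Xv (i : ℕ) : R := MvPowerSeries.X i

/-- total degree of a monomial -/
def degSum (d : ℕ →₀ ℕ) : ℕ := d.sum fun _ n => n

/-- the ring automorphism `s i` exchanging `x i` and `x (i+1)` -/
def sOp (i : ℕ) (f : R) : R := fun d => f (Finsupp.equivMapDomain (Equiv.swap i (i+1)) d)

/-- the divided difference operator `π i`, characterized by
`(x i - x (i+1)) * π i f = (1 + β x (i+1)) f - (1 + β x i) (s i f)`. -/
def ddiff (i : ℕ) (f : R) : R :=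
  Classical.epsilon fun gq : R =>
    (Xv i - Xv (i+1)) * gq = (1 + bR * Xv (i+1)) * f - (1 + bR * Xv i) * sOp i f

/-- complete homogeneous symmetric function of degree `j` in the variables `x_q, …, x_p` -/
def hsym (q p : ℕ) (j : ℤ) : R := fun d =>
  if (∀ k ∈ d.support, q ≤ k ∧ k ≤ p) ∧ (degSum d : ℤ) = j then 1 else 0

/-- `∏_{i=q}^{p} (1 + β x_i)` -/
def prodOneAdd (q p : ℕ) : R := ∏ i ∈ Finset.Icc q p, (1 + bR * Xv i)

/-- `G_m^{[p/q]} = Σ_{s≥0} (−β)^s (∏_{i=q}^p (1+βx_i)) h_{m+s}(x_q,…,x_p)`,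
defined coefficientwise (only the terms with `m + s ≤ deg d` can contribute to the
coefficient at a monomial `d`). -/
def Gsk (p q : ℕ) (m : ℤ) : R := fun d =>
  ∑ s ∈ Finset.range (((degSum d : ℤ) - m).toNat + 1),
    (-Polynomial.X : A) ^ s * MvPowerSeries.coeff (R := A) d (prodOneAdd q p * hsym q p (m + s))

/-- `G_m^{[p]} = G_m^{[p/1]}` -/
def Gk (p : ℕ) (m : ℤ) : R := Gsk p 1 m

/-- the geometric series `Σ_{s≥0} (−β x_i)^s = 1/(1+βx_i)` -/
def geom (i : ℕ) : R := fun d =>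
  if d.support ⊆ {i} then (-Polynomial.X : A) ^ (d i) else 0

/-- substitution of `x₁ = 0` -/
def setX1Zero (f : R) : R := fun d => if d 1 = 0 then f d else 0

/-- generalized binomial coefficient `C(c,s) = c(c−1)⋯(c−s+1)/s!` for `c : ℤ` -/
def intChoose (c : ℤ) (s : ℕ) : ℤ :=
  if 0 ≤ c then (c.toNat.choose s : ℤ) else (-1) ^ s * (((s : ℤ) - 1 - c).toNat.choose s : ℤ)

/-- `Σ_{s≥0} C(c,s) β^s G_{m+s}^{[p/q]}`, defined coefficientwise. -/
def JT (p q : ℕ) (c m : ℤ) : R := fun d =>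
  ∑ s ∈ Finset.range (((degSum d : ℤ) - m).toNat + 1),
    ((intChoose c s : ℤ) : A) * Polynomial.X ^ s * MvPowerSeries.coeff (R := A) d (Gsk p q (m + s))

/-- the Jacobi–Trudi type determinant `G̃_{λ/μ,f/g}` (rows and columns indexed by
`Fin r`, with `i : Fin r` representing the 1-based index `i+1`). -/
def GtildeSkew (r : ℕ) (lam mu f g : Fin r → ℕ) : R :=
  Matrix.det (Matrix.of fun i j : Fin r =>
    JT (f i) (g j) ((i : ℤ) - (j : ℤ))
      ((lam i : ℤ) - (mu j : ℤ) + (j : ℤ) - (i : ℤ)))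

/-- the Jacobi–Trudi type determinant `G̃_{λ,f}` -/
def Gtilde (r : ℕ) (lam f : Fin r → ℕ) : R :=
  GtildeSkew r lam (fun _ => 0) f (fun _ => 1)

/-- flagged skew set-valued tableaux of shape `λ/μ` with flagging `f/g`:
a tableau assigns to the box in row `i` (1-based index `i+1`), column `j`
(with `μᵢ < j ≤ λᵢ`) a nonempty subset of `{gᵢ,…,fᵢ}`, weakly increasing
along rows and strictly increasing along columns; boxes outside the shape
carry `∅`. -/
def IsFSVT (r : ℕ) (lam mu f g : Fin r → ℕ) (T : Fin r × ℕ → Finset ℕ) : Prop :=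
  (∀ (i : Fin r) (j : ℕ), ¬ (mu i < j ∧ j ≤ lam i) → T (i, j) = ∅) ∧
  (∀ (i : Fin r) (j : ℕ), mu i < j → j ≤ lam i → (T (i, j)).Nonempty) ∧
  (∀ (i : Fin r) (j k : ℕ), k ∈ T (i, j) → g i ≤ k ∧ k ≤ f i) ∧
  (∀ (i : Fin r) (j : ℕ), mu i < j → j + 1 ≤ lam i →
     ∀ a ∈ T (i, j), ∀ b ∈ T (i, j + 1), a ≤ b) ∧
  (∀ (i : Fin r) (h : (i : ℕ) + 1 < r) (j : ℕ),
     mu i < j → j ≤ lam i → mu ⟨(i : ℕ) + 1, h⟩ < j → j ≤ lam ⟨(i : ℕ) + 1, h⟩ →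
     ∀ a ∈ T (i, j), ∀ b ∈ T (⟨(i : ℕ) + 1, h⟩, j), a < b)

/-- the total number `|T|` of entries of a tableau -/
def entriesCount (r : ℕ) (lam mu : Fin r → ℕ) (T : Fin r × ℕ → Finset ℕ) : ℕ :=
  ∑ i : Fin r, ∑ j ∈ Finset.Ioc (mu i) (lam i), (T (i, j)).card

/-- `|λ/μ|` -/
def shapeSize (r : ℕ) (lam mu : Fin r → ℕ) : ℕ := ∑ i : Fin r, (lam i - mu i)

/-- the weight `β^{|T|−|λ/μ|} ∏_{k∈T} x_k` of a tableau -/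
def wt (r : ℕ) (lam mu : Fin r → ℕ) (T : Fin r × ℕ → Finset ℕ) : R :=
  bR ^ (entriesCount r lam mu T - shapeSize r lam mu) *
    ∏ i : Fin r, ∏ j ∈ Finset.Ioc (mu i) (lam i), ∏ k ∈ T (i, j), Xv k

/-- the flagged skew Grothendieck polynomial `G_{λ/μ,f/g}` as the (finite) sum of
the weights of all flagged skew set-valued tableaux -/
def GF (r : ℕ) (lam mu f g : Fin r → ℕ) : R :=
  ∑ᶠ (T : Fin r × ℕ → Finset ℕ) (_ : IsFSVT r lam mu f g T), wt r lam mu T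

/- permutations: `w ∈ S_n` is encoded as a permutation of `ℕ` fixing `0` and
everything `> n`. -/

/-- `w` belongs to `S_n` -/
def isSn (n : ℕ) (w : Equiv.Perm ℕ) : Prop := ∀ k, k = 0 ∨ n < k → w k = k

/-- Coxeter length = number of inversions -/
def len (n : ℕ) (w : Equiv.Perm ℕ) : ℕ :=
  (((Finset.Icc 1 n) ×ˢ (Finset.Icc 1 n)).filter fun pr : ℕ × ℕ =>
    pr.1 < pr.2 ∧ w pr.2 < w pr.1).card

/-- the rank function `r_w(p,q) = #{i ≤ p : w(i) ≤ q}` -/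
def rankf (w : Equiv.Perm ℕ) (p q : ℕ) : ℕ :=
  ((Finset.Icc 1 p).filter fun i => w i ≤ q).card

/-- the diagram `D(w)` -/
def inD (n : ℕ) (w : Equiv.Perm ℕ) (p q : ℕ) : Prop :=
  1 ≤ p ∧ p ≤ n ∧ 1 ≤ q ∧ q ≤ n ∧ q < w p ∧ p < w.symm q

/-- the essential set `Ess(w)` -/
def inEss (n : ℕ) (w : Equiv.Perm ℕ) (p q : ℕ) : Prop :=
  inD n w p q ∧ ¬ inD n w (p+1) q ∧ ¬ inD n w p (q+1)

/-- `w ∈ S_n` is vexillary: it avoids the pattern 2143 -/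
def Vexillary (n : ℕ) (w : Equiv.Perm ℕ) : Prop :=
  ¬ ∃ a b c d : ℕ, 1 ≤ a ∧ a < b ∧ b < c ∧ c < d ∧ d ≤ n ∧
      w b < w a ∧ w a < w d ∧ w d < w c

/-! The series factors as `G_m^{[p/q]} = (∏_{k=q}^{p} (1 + βx_k)) · H_m`, where
`H_m = Σ_{s ≥ 0} (-β)^s h_{m+s}(x_q, …, x_p)`. For `i ≠ p` both factors are symmetric in `xᵢ`,
`x_{i+1}`, so `(xᵢ - x_{i+1}) πᵢ G = β (x_{i+1} - xᵢ) G`. For `i = p` the factors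
`(1 + βx_{p+1})` and `(1 + βx_p)` complete `∏_{k=q}^{p} (1 + βx_k)` and its `s_p`-image to the
same product up to `p + 1`, and summing the identity
`h_j(…, x_p) - h_j(…, x_{p+1}) = (x_p - x_{p+1}) h_{j-1}(…, x_p, x_{p+1})` over `j` gives
`H_m - s_p H_m = (x_p - x_{p+1}) H^{[p+1]}_{m-1}`. The quotient by `xᵢ - x_{i+1}` is unique
because power series over `ℤ[β]` form a domain. -/

open MvPowerSeries Finsupp

theorem MvPowerSeries.coeff_rename_equiv {σ τ S : Type*} [CommSemiring S] (e : σ ≃ τ)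
    (f : MvPowerSeries σ S) (d : τ →₀ ℕ) :
    coeff d (rename e f) = coeff (equivMapDomain e.symm d) f := by
  conv_lhs => rw [show d = embDomain e.toEmbedding (equivMapDomain e.symm d) by
    ext k; obtain ⟨a, rfl⟩ := e.surjective k
    rw [show e a = e.toEmbedding a from rfl, embDomain_apply_self, equivMapDomain_apply]; simp]
  exact coeff_embDomain_rename _ _ _

theorem Equiv.swap_apply_mem_iff {α : Type*} [DecidableEq α] {a b : α} {s : Finset α}
    (h : a ∈ s ↔ b ∈ s) (k : α) : Equiv.swap a b k ∈ s ↔ k ∈ s := by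
  rcases eq_or_ne k a with rfl | hka
  · rw [Equiv.swap_apply_left, h]
  rcases eq_or_ne k b with rfl | hkb
  · rw [Equiv.swap_apply_right, h]
  · rw [Equiv.swap_apply_of_ne_of_ne hka hkb]

theorem sOp_eq_rename (i : ℕ) (f : R) : sOp i f = rename (Equiv.swap i (i + 1)) f := by
  ext d
  rw [coeff_rename_equiv, Equiv.symm_swap]
  rfl

theorem degSum_equivMapDomain (e : ℕ ≃ ℕ) (d : ℕ →₀ ℕ) :
    degSum (equivMapDomain e d) = degSum d :=
  sum_equivMapDomain _ _ _

theorem degSum_eq_degree (d : ℕ →₀ ℕ) : degSum d = d.degree := rfl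

theorem ddiff_eq_of_mul_eq {i : ℕ} {f g : R}
    (h : (Xv i - Xv (i + 1)) * g = (1 + bR * Xv (i + 1)) * f - (1 + bR * Xv i) * sOp i f) :
    ddiff i f = g := by
  have hX : Xv i - Xv (i + 1) ≠ 0 := sub_ne_zero.2 (X_inj.not.2 (by omega))
  have hspec : (Xv i - Xv (i + 1)) * ddiff i f =
      (1 + bR * Xv (i + 1)) * f - (1 + bR * Xv i) * sOp i f :=
    Classical.epsilon_spec (p := fun g' => (Xv i - Xv (i + 1)) * g' = _) ⟨g, h⟩
  exact mul_left_cancel₀ hX (hspec.trans h.symm)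

theorem forall_mem_support_equivMapDomain_iff {e : ℕ ≃ ℕ} {q p : ℕ}
    (he : ∀ k, e k ∈ Finset.Icc q p ↔ k ∈ Finset.Icc q p) (d : ℕ →₀ ℕ) :
    (∀ k ∈ (equivMapDomain e d).support, q ≤ k ∧ k ≤ p) ↔ ∀ k ∈ d.support, q ≤ k ∧ k ≤ p := by
  simp only [mem_support_iff, equivMapDomain_apply, ← Finset.mem_Icc]
  refine ⟨fun h k hk => (he k).1 (h (e k) (by simpa using hk)), fun h k hk => ?_⟩
  simpa using (he (e.symm k)).2 (h _ hk)

theorem forall_mem_support_le_succ_iff (d : ℕ →₀ ℕ) (q p : ℕ) :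
    (∀ k ∈ d.support, q ≤ k ∧ k ≤ p) ↔
      (∀ k ∈ d.support, q ≤ k ∧ k ≤ p + 1) ∧ d (p + 1) = 0 := by
  simp only [mem_support_iff]
  constructor
  · intro h
    refine ⟨fun k hk => (h k hk).imp_right Nat.le_succ_of_le, by_contra fun h0 => ?_⟩
    have := h _ h0
    omega
  · rintro ⟨h, h0⟩ k hk
    have hne : k ≠ p + 1 := by rintro rfl; exact hk h0
    have := h k hk
    omega

/-- `Σ_{s ≥ 0} (-β)^s h_{m+s}(x_q, …, x_p)`: the coefficient of a monomial of degree `n ≥ m` in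
the variables `x_q, …, x_p` comes from the single term `s = n - m`. -/
def hSeries (q p : ℕ) (m : ℤ) : R := fun d =>
  if (∀ k ∈ d.support, q ≤ k ∧ k ≤ p) ∧ m ≤ degSum d then
    (-Polynomial.X : A) ^ (degSum d - m).toNat else 0

theorem coeff_hSeries (q p : ℕ) (m : ℤ) (d : ℕ →₀ ℕ) :
    coeff d (hSeries q p m) = if (∀ k ∈ d.support, q ≤ k ∧ k ≤ p) ∧ m ≤ degSum d then
      (-Polynomial.X : A) ^ (degSum d - m).toNat else 0 := rfl

theorem rename_hSeries {e : ℕ ≃ ℕ} {q p : ℕ} (he : ∀ k, e k ∈ Finset.Icc q p ↔ k ∈ Finset.Icc q p)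
    (m : ℤ) : rename e (hSeries q p m) = hSeries q p m := by
  have he' (k : ℕ) : e.symm k ∈ Finset.Icc q p ↔ k ∈ Finset.Icc q p := by
    simpa using (he (e.symm k)).symm
  ext d : 1
  simp only [coeff_rename_equiv, coeff_hSeries, degSum_equivMapDomain,
    forall_mem_support_equivMapDomain_iff he']

theorem coeff_X_mul_hSeries {q p k : ℕ} (hk : k ∈ Finset.Icc q p) (m : ℤ) (d : ℕ →₀ ℕ) :
    coeff d (Xv k * hSeries q p (m - 1)) = if d k = 0 then 0 else coeff d (hSeries q p m) := by
  have hle : single k 1 ≤ d ↔ d k ≠ 0 := by simp [single_le_iff, Nat.one_le_iff_ne_zero]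
  rw [Xv, X_def, coeff_monomial_mul, one_mul]
  by_cases hdk : d k = 0
  · simp [hle, hdk]
  rw [if_pos (hle.2 hdk), if_neg hdk]
  set e := d - single k 1
  have hed : e + single k 1 = d := tsub_add_cancel_of_le (hle.2 hdk)
  have hdeg : degSum d = degSum e + 1 := by
    rw [← hed, degSum_eq_degree, degSum_eq_degree, map_add, degree_single]
  have hsupp : (∀ j ∈ e.support, q ≤ j ∧ j ≤ p) ↔ ∀ j ∈ d.support, q ≤ j ∧ j ≤ p := by
    simp only [mem_support_iff]
    refine ⟨fun h j hj => ?_, fun h j hj => h j fun h0 => hj (by simp [e, h0])⟩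
    rcases eq_or_ne j k with rfl | hjk
    · exact Finset.mem_Icc.1 hk
    · exact h j (by simpa [e, single_apply, hjk.symm] using hj)
  have hcond : m - 1 ≤ (degSum e : ℤ) ↔ m ≤ (degSum d : ℤ) := by rw [hdeg]; push_cast; omega
  have hexp : (degSum e : ℤ) - (m - 1) = degSum d - m := by rw [hdeg]; push_cast; ring
  simp only [coeff_hSeries, hsupp, hcond, hexp]

theorem hSeries_sub_rename_swap {q p : ℕ} (hqp : q ≤ p) (m : ℤ) :
    hSeries q p m - rename (Equiv.swap p (p + 1)) (hSeries q p m) =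
      (Xv p - Xv (p + 1)) * hSeries q (p + 1) (m - 1) := by
  have hswap (k : ℕ) : Equiv.swap p (p + 1) k ∈ Finset.Icc q (p + 1) ↔ k ∈ Finset.Icc q (p + 1) :=
    Equiv.swap_apply_mem_iff (by simp only [Finset.mem_Icc]; omega) k
  ext d : 1
  rw [map_sub, sub_mul, map_sub, coeff_X_mul_hSeries (Finset.mem_Icc.2 ⟨hqp, p.le_succ⟩),
    coeff_X_mul_hSeries (Finset.mem_Icc.2 ⟨by omega, le_rfl⟩), coeff_rename_equiv, Equiv.symm_swap]
  simp only [coeff_hSeries, degSum_equivMapDomain,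
    forall_mem_support_le_succ_iff (equivMapDomain (Equiv.swap p (p + 1)) d) q p,
    forall_mem_support_le_succ_iff d q p, forall_mem_support_equivMapDomain_iff hswap,
    equivMapDomain_apply, Equiv.symm_swap, Equiv.swap_apply_right]
  by_cases h0 : d p = 0 <;> by_cases h1 : d (p + 1) = 0 <;> simp [h0, h1]

theorem rename_prod_one_add_mul_X {e : ℕ ≃ ℕ} {s : Finset ℕ} (hs : ∀ k, e k ∈ s ↔ k ∈ s) :
    rename e (∏ k ∈ s, (1 + bR * Xv k)) = ∏ k ∈ s, (1 + bR * Xv k) := by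
  simp only [map_prod, map_add, map_one, map_mul, bR, Xv, rename_C, rename_X]
  exact Finset.prod_equiv e (fun k => (hs k).symm) fun _ _ => rfl

theorem coeff_hsym (q p : ℕ) (j : ℤ) (d : ℕ →₀ ℕ) :
    coeff d (hsym q p j) =
      if (∀ k ∈ d.support, q ≤ k ∧ k ≤ p) ∧ (degSum d : ℤ) = j then 1 else 0 := rfl

theorem coeff_Gsk (p q : ℕ) (m : ℤ) (d : ℕ →₀ ℕ) :
    coeff d (Gsk p q m) = ∑ s ∈ Finset.range (((degSum d : ℤ) - m).toNat + 1),
      (-Polynomial.X : A) ^ s * coeff d (prodOneAdd q p * hsym q p (m + s)) := rfl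

theorem sum_range_mul_coeff_hsym {q p K : ℕ} {m : ℤ} {d : ℕ →₀ ℕ}
    (hK : (degSum d : ℤ) - m < K) :
    ∑ s ∈ Finset.range K, (-Polynomial.X : A) ^ s * coeff d (hsym q p (m + s)) =
      coeff d (hSeries q p m) := by
  simp only [coeff_hsym, coeff_hSeries, mul_ite, mul_one, mul_zero]
  split_ifs with h
  · rw [Finset.sum_eq_single_of_mem (degSum d - m).toNat (Finset.mem_range.2 (by omega)),
      if_pos ⟨h.1, by omega⟩]
    rintro s - hs
    exact if_neg fun h' => hs (by omega)
  · exact Finset.sum_eq_zero fun s _ => if_neg fun h' => h ⟨h'.1, by omega⟩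

theorem Gsk_eq_prodOneAdd_mul_hSeries (p q : ℕ) (m : ℤ) :
    Gsk p q m = prodOneAdd q p * hSeries q p m := by
  ext d : 1
  simp only [coeff_Gsk, coeff_mul, Finset.mul_sum]
  rw [Finset.sum_comm]
  refine Finset.sum_congr rfl fun x hx => ?_
  have hdeg : degSum x.2 ≤ degSum d := by
    rw [← Finset.HasAntidiagonal.mem_antidiagonal.1 hx, degSum_eq_degree, degSum_eq_degree, map_add]
    exact Nat.le_add_left _ _
  rw [← sum_range_mul_coeff_hsym (K := ((degSum d : ℤ) - m).toNat + 1) (by omega),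
    Finset.mul_sum]
  exact Finset.sum_congr rfl fun s _ => mul_left_comm _ _ _

theorem rename_Gsk {e : ℕ ≃ ℕ} {q p : ℕ} (he : ∀ k, e k ∈ Finset.Icc q p ↔ k ∈ Finset.Icc q p)
    (m : ℤ) : rename e (Gsk p q m) = Gsk p q m := by
  rw [Gsk_eq_prodOneAdd_mul_hSeries, map_mul, rename_hSeries he, prodOneAdd,
    rename_prod_one_add_mul_X he]

theorem mul_X_sub_X_Gsk_succ {q p : ℕ} (hqp : q ≤ p) (m : ℤ) :
    (Xv p - Xv (p + 1)) * Gsk (p + 1) q (m - 1) =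
      (1 + bR * Xv (p + 1)) * Gsk p q m -
        (1 + bR * Xv p) * rename (Equiv.swap p (p + 1)) (Gsk p q m) := by
  set Q := ∏ k ∈ (Finset.Icc q p).erase p, (1 + bR * Xv k)
  have hP : prodOneAdd q p = (1 + bR * Xv p) * Q :=
    (Finset.mul_prod_erase _ _ (Finset.mem_Icc.2 ⟨hqp, le_rfl⟩)).symm
  have hP' : prodOneAdd q (p + 1) = (1 + bR * Xv p) * Q * (1 + bR * Xv (p + 1)) := by
    rw [prodOneAdd, Finset.prod_Icc_succ_top (by omega), ← prodOneAdd, hP]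
  have hQ : rename (Equiv.swap p (p + 1)) Q = Q :=
    rename_prod_one_add_mul_X (Equiv.swap_apply_mem_iff (by simp))
  have hXp : rename (Equiv.swap p (p + 1)) (1 + bR * Xv p) = 1 + bR * Xv (p + 1) := by
    simp [bR, Xv]
  rw [Gsk_eq_prodOneAdd_mul_hSeries, Gsk_eq_prodOneAdd_mul_hSeries, map_mul, hP', hP, map_mul,
    hQ, hXp]
  linear_combination (-((1 + bR * Xv p) * Q * (1 + bR * Xv (p + 1)))) *
    hSeries_sub_rename_swap hqp m

theorem stmt2 (m : ℤ) (p i : ℕ) (hp : 1 ≤ p) (hi : 1 ≤ i) :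
    (i = p → ddiff p (Gk p m) = Gk (p+1) (m-1)) ∧
    (i ≠ p → ddiff i (Gk p m) = -bR * Gk p m) := by
  refine ⟨fun _ => ddiff_eq_of_mul_eq ?_, fun hip => ddiff_eq_of_mul_eq ?_⟩
  · rw [sOp_eq_rename]
    exact mul_X_sub_X_Gsk_succ hp m
  · have hswap := Equiv.swap_apply_mem_iff (s := Finset.Icc 1 p) (a := i) (b := i + 1)
      (by simp only [Finset.mem_Icc]; omega)
    rw [sOp_eq_rename, Gk, rename_Gsk hswap]
    ring

end
end

section
/- Let λ/μ be a skew shape of length r with flagging f/g, and let 1 ≤ k < r satisfy μ_k ≥ λ_{k+1}. Then G̃_{λ/μ,f/g} = G̃_{λ̂/μ̂,f̂/ĝ} · G̃_{λ̌/μ̌,f̌/ǧ}, where for a sequence t = (t₁,…,t_r) we write t̂ = (t₁,…,t_k) and ť = (t_{k+1},…,t_r). -/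
/- Common setup: `R = ℤ[β][[x₀,x₁,x₂,…]]` with `β = Polynomial.X`; only the
variables `x i` for `i ≥ 1` are used in the statements. -/

attribute [local instance] Classical.propDecidable

noncomputable section

/- The lower-left block of the Jacobi–Trudi matrix vanishes: an entry there has
`c = i - j ≥ 1` and `m + c = λᵢ - μⱼ ≤ λ_{k+1} - μ_k ≤ 0`, and
`Σ_s C(c,s) β^s G_{m+s}` vanishes for such `c, m` by induction on `c`, using Pascal's rule
and `G_m + β G_{m+1} = ∏(1+βxᵢ) h_m = 0` for `m < 0`. The matrix is therefore block upper
triangular and its determinant is the product of the determinants of the diagonal blocks. -/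

lemma hsym_of_neg (q p : ℕ) {j : ℤ} (hj : j < 0) : hsym q p j = 0 := by
  funext d
  rw [hsym, if_neg fun h => by omega]
  rfl

lemma intChoose_zero_right (c : ℤ) : intChoose c 0 = 1 := by
  unfold intChoose; split <;> simp

lemma intChoose_zero_succ (s : ℕ) : intChoose 0 (s + 1) = 0 := by
  simp [intChoose]

lemma intChoose_succ_succ {c : ℤ} (hc : 0 ≤ c) (s : ℕ) :
    intChoose (c + 1) (s + 1) = intChoose c s + intChoose c (s + 1) := by
  rw [intChoose, intChoose, intChoose, if_pos hc, if_pos (by omega), if_pos hc,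
    show (c + 1).toNat = c.toNat + 1 by omega, Nat.choose_succ_succ']
  push_cast; ring

lemma Gsk_add_bR_mul_Gsk_succ (p q : ℕ) {m : ℤ} (hm : m < 0) :
    Gsk p q m + bR * Gsk p q (m + 1) = 0 := by
  refine MvPowerSeries.ext fun d => ?_
  rw [map_add, bR, MvPowerSeries.coeff_C_mul, map_zero, MvPowerSeries.coeff_apply,
    MvPowerSeries.coeff_apply, Gsk, Gsk,
    show ((degSum d : ℤ) - m).toNat = ((degSum d : ℤ) - (m + 1)).toNat + 1 by omega,
    Finset.sum_range_succ', Finset.mul_sum, add_right_comm, ← Finset.sum_add_distrib,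
    Finset.sum_eq_zero, zero_add]
  · simp [hsym_of_neg q p hm]
  · intro s _
    rw [show m + ((s + 1 : ℕ) : ℤ) = m + 1 + s by push_cast; ring, pow_succ]
    ring

lemma JT_zero (p q : ℕ) (m : ℤ) : JT p q 0 m = Gsk p q m := by
  funext d
  rw [JT, Finset.sum_eq_single_of_mem 0 (by simp)]
  · simp [intChoose_zero_right, MvPowerSeries.coeff_apply]
  · rintro (_ | s) _ hs
    · exact absurd rfl hs
    · simp [intChoose_zero_succ]

lemma JT_succ (p q : ℕ) {c m : ℤ} (hc : 0 ≤ c) (hm : m < 0) :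
    JT p q (c + 1) m = JT p q c m + bR * JT p q c (m + 1) := by
  refine MvPowerSeries.ext fun d => ?_
  rw [map_add, bR, MvPowerSeries.coeff_C_mul, MvPowerSeries.coeff_apply,
    MvPowerSeries.coeff_apply, MvPowerSeries.coeff_apply, JT, JT, JT,
    show ((degSum d : ℤ) - m).toNat = ((degSum d : ℤ) - (m + 1)).toNat + 1 by omega,
    Finset.sum_range_succ', Finset.sum_range_succ' (fun s => ((intChoose c s : ℤ) : A) *
      Polynomial.X ^ s * MvPowerSeries.coeff d (Gsk p q (m + s))),
    Finset.mul_sum, intChoose_zero_right, intChoose_zero_right]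
  have pascal : ∀ s : ℕ, ((intChoose (c + 1) (s + 1) : ℤ) : A) * Polynomial.X ^ (s + 1) *
        MvPowerSeries.coeff d (Gsk p q (m + (s + 1 : ℕ))) =
      ((intChoose c (s + 1) : ℤ) : A) * Polynomial.X ^ (s + 1) *
        MvPowerSeries.coeff d (Gsk p q (m + (s + 1 : ℕ))) +
      Polynomial.X * (((intChoose c s : ℤ) : A) * Polynomial.X ^ s *
        MvPowerSeries.coeff d (Gsk p q (m + 1 + s))) := by
    intro s
    rw [intChoose_succ_succ hc, show m + ((s + 1 : ℕ) : ℤ) = m + 1 + s by push_cast; ring]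
    push_cast; ring
  simp only [pascal, Finset.sum_add_distrib]
  ring

lemma JT_eq_zero (p q : ℕ) {c m : ℤ} (hc : 1 ≤ c) (hcm : m + c ≤ 0) : JT p q c m = 0 := by
  induction c, hc using Int.leInduction generalizing m with
  | base =>
    rw [show (1 : ℤ) = 0 + 1 by rfl, JT_succ p q le_rfl (by omega), JT_zero, JT_zero,
      Gsk_add_bR_mul_Gsk_succ p q (by omega)]
  | succ c hc ih =>
    rw [JT_succ p q (by omega) (by omega), ih (by omega), ih (by omega), mul_zero, add_zero]

lemma Matrix.det_eq_det_mul_det_of_lowerLeft_eq_zero {α : Type*} [CommRing α] {r k : ℕ}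
    (hkr : k ≤ r) (M : Matrix (Fin r) (Fin r) α)
    (hM : ∀ i j : Fin r, k ≤ (i : ℕ) → (j : ℕ) < k → M i j = 0) :
    M.det = (M.submatrix (Fin.castLE hkr) (Fin.castLE hkr)).det *
      (M.submatrix (fun i : Fin (r - k) => ⟨i + k, Nat.add_lt_of_lt_sub i.isLt⟩)
        (fun i : Fin (r - k) => ⟨i + k, Nat.add_lt_of_lt_sub i.isLt⟩)).det := by
  let e : Fin k ⊕ Fin (r - k) ≃ Fin r := finSumFinEquiv.trans (finCongr (by omega))
  have e_inl : ∀ i, e (Sum.inl i) = Fin.castLE hkr i := fun i => Fin.ext (by simp [e])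
  have e_inr : ∀ i : Fin (r - k), e (Sum.inr i) = ⟨i + k, Nat.add_lt_of_lt_sub i.isLt⟩ :=
    fun i => Fin.ext (by simp [e, Nat.add_comm])
  have lowerLeft : (M.submatrix e e).toBlocks₂₁ = 0 := by
    ext i j
    simpa [Matrix.toBlocks₂₁, e_inl, e_inr] using hM _ _ (by simp) (by simp)
  rw [← M.det_submatrix_equiv_self e, ← Matrix.fromBlocks_toBlocks (M.submatrix e e),
    lowerLeft, Matrix.det_fromBlocks_zero₂₁]
  congr 2
  ext i j
  simp [Matrix.toBlocks₂₂, e_inr]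

theorem stmt13_general (r : ℕ) (lam mu f g : Fin r → ℕ)
    (hlam_anti : ∀ i j : Fin r, i ≤ j → lam j ≤ lam i)
    (hmu_anti : ∀ i j : Fin r, i ≤ j → mu j ≤ mu i)
    (k : ℕ) (hkr : k < r)
    (hmuk : lam ⟨k, hkr⟩ ≤ mu ⟨k - 1, Nat.lt_of_le_of_lt (Nat.sub_le k 1) hkr⟩) :
    GtildeSkew r lam mu f g =
      GtildeSkew k (fun i => lam (Fin.castLE hkr.le i)) (fun i => mu (Fin.castLE hkr.le i))
        (fun i => f (Fin.castLE hkr.le i)) (fun i => g (Fin.castLE hkr.le i)) *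
      GtildeSkew (r - k) (fun i => lam ⟨(i : ℕ) + k, Nat.add_lt_of_lt_sub i.isLt⟩)
        (fun i => mu ⟨(i : ℕ) + k, Nat.add_lt_of_lt_sub i.isLt⟩)
        (fun i => f ⟨(i : ℕ) + k, Nat.add_lt_of_lt_sub i.isLt⟩)
        (fun i => g ⟨(i : ℕ) + k, Nat.add_lt_of_lt_sub i.isLt⟩) := by
  rw [GtildeSkew, Matrix.det_eq_det_mul_det_of_lowerLeft_eq_zero hkr.le]
  · refine congrArg₂ (· * ·) rfl (congrArg Matrix.det (Matrix.ext fun i j => ?_))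
    exact congrArg₂ (JT _ _) (by push_cast; ring) (by push_cast; ring)
  · intro i j hi hj
    have lam_le_mu : lam i ≤ mu j := ((hlam_anti ⟨k, hkr⟩ i hi).trans hmuk).trans
      (hmu_anti j _ (Fin.le_def.2 (by dsimp only; omega)))
    exact JT_eq_zero _ _ (by omega) (by omega)

theorem stmt13 (r : ℕ) (lam mu f g : Fin r → ℕ)
    (hlam_anti : ∀ i j : Fin r, i ≤ j → lam j ≤ lam i) (hlam_pos : ∀ i, 0 < lam i)
    (hmu_anti : ∀ i j : Fin r, i ≤ j → mu j ≤ mu i) (hmule : ∀ i, mu i ≤ lam i)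
    (hf_pos : ∀ i, 0 < f i) (hg_pos : ∀ i, 0 < g i)
    (hflag : ∀ (i : Fin r) (h : (i : ℕ) + 1 < r), mu i < lam ⟨(i : ℕ) + 1, h⟩ →
      g i ≤ g ⟨(i : ℕ) + 1, h⟩ ∧ f i ≤ f ⟨(i : ℕ) + 1, h⟩)
    (k : ℕ) (hk1 : 1 ≤ k) (hkr : k < r)
    (hmuk : lam ⟨k, hkr⟩ ≤ mu ⟨k - 1, Nat.lt_of_le_of_lt (Nat.sub_le k 1) hkr⟩) :
    GtildeSkew r lam mu f g =
      GtildeSkew k (fun i => lam (Fin.castLE hkr.le i)) (fun i => mu (Fin.castLE hkr.le i))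
        (fun i => f (Fin.castLE hkr.le i)) (fun i => g (Fin.castLE hkr.le i)) *
      GtildeSkew (r - k) (fun i => lam ⟨(i : ℕ) + k, Nat.add_lt_of_lt_sub i.isLt⟩)
        (fun i => mu ⟨(i : ℕ) + k, Nat.add_lt_of_lt_sub i.isLt⟩)
        (fun i => f ⟨(i : ℕ) + k, Nat.add_lt_of_lt_sub i.isLt⟩)
        (fun i => g ⟨(i : ℕ) + k, Nat.add_lt_of_lt_sub i.isLt⟩) :=
  stmt13_general r lam mu f g hlam_anti hmu_anti k hkr hmuk
end
end

section
/- Let λ/μ be a skew shape of length r with flagging f/g, and let 1 ≤ k ≤ r satisfy: μ_k < λ_k, g_k ≤ f_k, (g_k < g_{k+1} or k = r), and (μ_{k−1} > μ_k or k = 1). Let μ' be obtained from μ by replacing μ_k with μ_k + 1, and g' be obtained from g by replacing g_k with g_k + 1 (so f/g is a flagging of λ/μ' and f/g' is a flagging of λ/μ). Then G̃_{λ/μ,f/g} = x_{g_k}·G̃_{λ/μ',f/g} + (1+βx_{g_k})·G̃_{λ/μ,f/g'}. -/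
/- Common setup: `R = ℤ[β][[x₀,x₁,x₂,…]]` with `β = Polynomial.X`; only the
variables `x i` for `i ≥ 1` are used in the statements. -/

attribute [local instance] Classical.propDecidable

noncomputable section

/-
Peeling off the smallest variable `x_q` gives, for `q ≤ p`,
`h_j(x_q..x_p) = x_q h_{j-1}(x_q..x_p) + h_j(x_{q+1}..x_p)` and
`∏_{i=q}^p (1+βx_i) = (1+βx_q) ∏_{i=q+1}^p (1+βx_i)`, hence
`G_m^{[p/q]} = x_q G_{m-1}^{[p/q]} + (1+βx_q) G_m^{[p/q+1]}`; the same recursion passes to the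
entries `Σ_s C(c,s) β^s G_{m+s}^{[p/q]}` of the determinant. In column `k` we have `q = g_k`, and
lowering `m` by one is raising `μ_k` by one, so multilinearity of the determinant in column `k`
gives the identity, provided every entry of that column obeys the recursion. When `g_k ≤ f_i`
this is the above. Otherwise there are no variables: for `i < k` the index `m` is at least `2`
and all entries involved vanish; for `i > k` the flagging forces `λ_i ≤ μ_k`, so `m ≤ -(i - k)`,
and the entry `Σ_s C(c,s) β^s (-β)^{-m-s} = β^{-m} C(c-1,-m)` vanishes as well.
-/

lemma Matrix.det_eq_mul_add_mul_of_col {n S : Type*} [Fintype n] [DecidableEq n] [CommRing S]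
    {M M₁ M₂ : Matrix n n S} (k : n) (a b : S) (h₁ : ∀ i j, j ≠ k → M₁ i j = M i j)
    (h₂ : ∀ i j, j ≠ k → M₂ i j = M i j) (hk : ∀ i, M i k = a * M₁ i k + b * M₂ i k) :
    M.det = a * M₁.det + b * M₂.det := by
  have hcol : ∀ N : Matrix n n S, (∀ i j, j ≠ k → N i j = M i j) →
      N = M.updateCol k fun i => N i k := fun N hN => by
    ext i j
    rcases eq_or_ne j k with rfl | hj
    · simp
    · simp [hj, hN i j hj]
  have hM : M = M.updateCol k (a • (fun i => M₁ i k) + b • fun i => M₂ i k) :=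
    hcol M (fun _ _ _ => rfl) |>.trans (by congr 1; ext i; simp [hk])
  rw [hM, Matrix.det_updateCol_add, Matrix.det_updateCol_smul, Matrix.det_updateCol_smul,
    ← hcol M₁ h₁, ← hcol M₂ h₂]

namespace GrothendieckJT

open MvPowerSeries Finset

lemma degSum_eq_degree (d : ℕ →₀ ℕ) : degSum d = d.degree := rfl

lemma degSum_tsub_single_add_one {d : ℕ →₀ ℕ} {q : ℕ} (h : d q ≠ 0) :
    degSum (d - Finsupp.single q 1) + 1 = degSum d := by
  conv_rhs => rw [← tsub_add_cancel_of_le (Finsupp.single_le_iff.2 (Nat.one_le_iff_ne_zero.2 h))]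
  rw [degSum_eq_degree, degSum_eq_degree, map_add, Finsupp.degree_single]

lemma coeff_Xv_mul (q : ℕ) (F : R) (d : ℕ →₀ ℕ) :
    coeff d (Xv q * F) = if d q = 0 then 0 else coeff (d - Finsupp.single q 1) F := by
  rw [Xv, MvPowerSeries.X, coeff_monomial_mul]
  by_cases h : d q = 0
  · simp [Finsupp.single_le_iff, h]
  · rw [if_neg h, if_pos (Finsupp.single_le_iff.2 (Nat.one_le_iff_ne_zero.2 h)), one_mul]

lemma coeff_one_add_bR_mul (q : ℕ) (F : R) (d : ℕ →₀ ℕ) :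
    coeff d ((1 + bR * Xv q) * F) = coeff d F + Polynomial.X * coeff d (Xv q * F) := by
  rw [add_mul, one_mul, map_add, mul_assoc, bR, coeff_C_mul]

/-- `Σ_{s≥0} a s • F (m + s)`, truncated at each monomial exactly as in `Gsk` and `JT`. -/
def truncSum (a : ℕ → A) (F : ℤ → R) (m : ℤ) : R := fun d =>
  ∑ s ∈ range (((degSum d : ℤ) - m).toNat + 1), a s * coeff d (F (m + s))

def OrderAtLeast (F : ℤ → R) : Prop :=
  ∀ (j : ℤ) (d : ℕ →₀ ℕ), (degSum d : ℤ) < j → coeff d (F j) = 0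

lemma Gsk_eq_truncSum (p q : ℕ) :
    Gsk p q = truncSum (fun s => (-Polynomial.X) ^ s) (fun j => prodOneAdd q p * hsym q p j) :=
  rfl

lemma JT_eq_truncSum (p q : ℕ) (c : ℤ) :
    JT p q c = truncSum (fun s => (intChoose c s : A) * Polynomial.X ^ s) (Gsk p q) :=
  rfl

section truncSum

variable {F F' : ℤ → R} (a : ℕ → A)

lemma coeff_truncSum (m : ℤ) (d : ℕ →₀ ℕ) :
    coeff d (truncSum a F m) =
      ∑ s ∈ range (((degSum d : ℤ) - m).toNat + 1), a s * coeff d (F (m + s)) :=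
  rfl

lemma coeff_truncSum_eq_sum_range (hF : OrderAtLeast F) {m : ℤ} {d : ℕ →₀ ℕ} {N : ℕ}
    (hN : ((degSum d : ℤ) - m).toNat < N) :
    coeff d (truncSum a F m) = ∑ s ∈ range N, a s * coeff d (F (m + s)) := by
  refine sum_subset (range_subset_range.2 hN) fun s _ hs => ?_
  rw [mem_range, not_lt] at hs
  rw [hF _ _ (by omega), mul_zero]

lemma OrderAtLeast.truncSum (hF : OrderAtLeast F) : OrderAtLeast (truncSum a F) :=
  fun j d hd => by
    rw [coeff_truncSum]
    exact sum_eq_zero fun s _ => by rw [hF _ _ (by omega), mul_zero]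

lemma truncSum_rec (hF' : OrderAtLeast F') (q : ℕ)
    (hrec : ∀ j, F j = Xv q * F (j - 1) + (1 + bR * Xv q) * F' j) (m : ℤ) :
    truncSum a F m = Xv q * truncSum a F (m - 1) + (1 + bR * Xv q) * truncSum a F' m := by
  ext d : 1
  rw [map_add, coeff_Xv_mul, coeff_one_add_bR_mul, coeff_Xv_mul, coeff_truncSum]
  by_cases h : d q = 0
  · simp only [if_pos h, zero_add, mul_zero, add_zero, coeff_truncSum]
    refine sum_congr rfl fun s _ => ?_
    rw [hrec, map_add, coeff_Xv_mul, coeff_one_add_bR_mul, coeff_Xv_mul]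
    simp only [if_pos h, zero_add, mul_zero, add_zero]
  · have hdeg := degSum_tsub_single_add_one h
    have hrange : ((degSum (d - Finsupp.single q 1) : ℤ) - (m - 1)).toNat =
        ((degSum d : ℤ) - m).toNat := by omega
    rw [if_neg h, if_neg h, coeff_truncSum, coeff_truncSum, hrange,
      coeff_truncSum_eq_sum_range a hF' (N := ((degSum d : ℤ) - m).toNat + 1) (by omega),
      mul_sum, ← sum_add_distrib, ← sum_add_distrib]
    refine sum_congr rfl fun s _ => ?_
    rw [hrec, map_add, coeff_Xv_mul, coeff_one_add_bR_mul, coeff_Xv_mul, if_neg h, if_neg h,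
      show m + s - 1 = m - 1 + s by ring]
    ring

end truncSum

lemma coeff_hsym (q p : ℕ) (j : ℤ) (d : ℕ →₀ ℕ) :
    coeff d (hsym q p j) =
      if (∀ k ∈ d.support, q ≤ k ∧ k ≤ p) ∧ (degSum d : ℤ) = j then 1 else 0 :=
  rfl

lemma orderAtLeast_prodOneAdd_mul_hsym (q p : ℕ) :
    OrderAtLeast fun j => prodOneAdd q p * hsym q p j := by
  intro j d hd
  refine (coeff_mul _ _ _).trans (sum_eq_zero fun x hx => ?_)
  have hle : degSum x.2 ≤ degSum d := by
    rw [← mem_antidiagonal.mp hx, degSum_eq_degree, degSum_eq_degree, map_add]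
    omega
  rw [coeff_hsym, if_neg (by omega), mul_zero]

lemma hsym_rec {q p : ℕ} (hqp : q ≤ p) (j : ℤ) :
    hsym q p j = Xv q * hsym q p (j - 1) + hsym (q + 1) p j := by
  ext d : 1
  rw [map_add, coeff_Xv_mul, coeff_hsym, coeff_hsym, coeff_hsym]
  by_cases h : d q = 0
  · rw [if_pos h, zero_add]
    refine if_congr ?_ rfl rfl
    simp only [Finsupp.mem_support_iff]
    grind
  · have hdeg := degSum_tsub_single_add_one h
    have hq : ¬((∀ k ∈ d.support, q + 1 ≤ k ∧ k ≤ p) ∧ (degSum d : ℤ) = j) :=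
      fun hc => by have := hc.1 q (Finsupp.mem_support_iff.2 h); omega
    rw [if_neg h, if_neg hq, add_zero]
    refine if_congr ?_ rfl rfl
    simp only [Finsupp.mem_support_iff, Finsupp.tsub_apply, Finsupp.single_apply]
    grind

lemma prodOneAdd_eq_mul {q p : ℕ} (hqp : q ≤ p) :
    prodOneAdd q p = (1 + bR * Xv q) * prodOneAdd (q + 1) p := by
  rw [prodOneAdd, prodOneAdd, Icc_eq_cons_Ioc hqp, prod_cons, Icc_add_one_left_eq_Ioc]

lemma Gsk_rec {q p : ℕ} (hqp : q ≤ p) (m : ℤ) :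
    Gsk p q m = Xv q * Gsk p q (m - 1) + (1 + bR * Xv q) * Gsk p (q + 1) m := by
  rw [Gsk_eq_truncSum, Gsk_eq_truncSum]
  exact truncSum_rec _ (orderAtLeast_prodOneAdd_mul_hsym _ _) q
    (fun j => by rw [hsym_rec hqp, prodOneAdd_eq_mul hqp]; ring) m

lemma orderAtLeast_Gsk (p q : ℕ) : OrderAtLeast (Gsk p q) :=
  (orderAtLeast_prodOneAdd_mul_hsym q p).truncSum _

lemma JT_rec {q p : ℕ} (hqp : q ≤ p) (c m : ℤ) :
    JT p q c m = Xv q * JT p q c (m - 1) + (1 + bR * Xv q) * JT p (q + 1) c m := by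
  rw [JT_eq_truncSum, JT_eq_truncSum]
  exact truncSum_rec _ (orderAtLeast_Gsk p (q + 1)) q (Gsk_rec hqp) m

lemma prodOneAdd_of_lt {q p : ℕ} (h : p < q) : prodOneAdd q p = 1 := by
  rw [prodOneAdd, Icc_eq_empty (by omega), prod_empty]

lemma coeff_hsym_of_lt {q p : ℕ} (h : p < q) (j : ℤ) (d : ℕ →₀ ℕ) :
    coeff d (hsym q p j) = if d = 0 ∧ j = 0 then 1 else 0 := by
  rw [coeff_hsym]
  by_cases hd : d = 0
  · simp [hd, degSum_eq_degree, eq_comm]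
  · obtain ⟨k, hk⟩ := Finsupp.support_nonempty_iff.2 hd
    rw [if_neg (fun hc => by have := hc.1 k hk; omega), if_neg (fun hc => hd hc.1)]

lemma coeff_Gsk_of_lt {q p : ℕ} (h : p < q) (m : ℤ) (d : ℕ →₀ ℕ) :
    coeff d (Gsk p q m) = if d = 0 ∧ m ≤ 0 then (-Polynomial.X) ^ (-m).toNat else 0 := by
  rw [Gsk_eq_truncSum, coeff_truncSum]
  simp only [prodOneAdd_of_lt h, one_mul, coeff_hsym_of_lt h, mul_ite, mul_one, mul_zero]
  by_cases hdm : d = 0 ∧ m ≤ 0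
  · obtain ⟨rfl, hm⟩ := hdm
    rw [if_pos ⟨rfl, hm⟩, sum_eq_single_of_mem (-m).toNat (by simp [degSum_eq_degree]),
      if_pos ⟨rfl, by omega⟩]
    exact fun s _ hs => if_neg fun hc => hs (by omega)
  · rw [if_neg hdm]
    exact sum_eq_zero fun s _ => if_neg fun hc => hdm ⟨hc.1, by omega⟩

lemma JT_eq_zero_of_lt_of_pos {q p : ℕ} (h : p < q) (c : ℤ) {m : ℤ} (hm : 0 < m) :
    JT p q c m = 0 := by
  ext d : 1
  rw [JT_eq_truncSum, coeff_truncSum, map_zero]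
  exact sum_eq_zero fun s _ => by rw [coeff_Gsk_of_lt h, if_neg (by omega), mul_zero]

/-- Without variables, the entry is `Σ_{s ≤ -m} C(c,s) β^s (-β)^{-m-s} = β^{-m} C(c-1,-m)`. -/
lemma JT_eq_zero_of_lt_of_le_neg {q p : ℕ} (h : p < q) {c m : ℤ} (hc : 0 < c) (hcm : c ≤ -m) :
    JT p q c m = 0 := by
  ext d : 1
  rw [JT_eq_truncSum, coeff_truncSum, map_zero]
  by_cases hd : d = 0
  swap
  · exact sum_eq_zero fun s _ => by rw [coeff_Gsk_of_lt h, if_neg (fun hc => hd hc.1), mul_zero]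
  subst hd
  obtain ⟨n, rfl⟩ : ∃ n : ℕ, c = n + 1 := ⟨(c - 1).toNat, by omega⟩
  obtain ⟨M, rfl⟩ : ∃ M : ℕ, m = -M := ⟨(-m).toNat, by omega⟩
  rw [show ((degSum 0 : ℤ) - -(M : ℤ)).toNat = M by simp [degSum_eq_degree]]
  calc _ = ∑ s ∈ range (M + 1),
        (((-1) ^ s * (n + 1).choose s : ℤ) : A) * (-Polynomial.X) ^ M := by
        refine sum_congr rfl fun s hs => ?_
        have hsM : s ≤ M := Nat.lt_succ_iff.1 (mem_range.1 hs)
        rw [coeff_Gsk_of_lt h, if_pos ⟨rfl, by omega⟩, intChoose, if_pos (by omega),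
          show (-(-(M : ℤ) + s)).toNat = M - s by omega,
          show ((n : ℤ) + 1).toNat = n + 1 by omega,
          ← pow_mul_pow_sub _ hsM, neg_pow (Polynomial.X : A) s]
        have hsq : ((-1 : A) ^ s) * (-1) ^ s = 1 := by rw [← mul_pow]; simp
        push_cast
        linear_combination
          (-(((n + 1).choose s : A) * Polynomial.X ^ s * (-Polynomial.X) ^ (M - s))) * hsq
    _ = 0 := by
        rw [← sum_mul, ← Int.cast_sum, Int.alternating_sum_range_choose_eq_choose,
          Nat.choose_eq_zero_of_lt (by omega)]
        simp

lemma JT_rec_of_lt {q p : ℕ} (h : p < q) {c m : ℤ} (hm : 2 ≤ m ∨ 0 < c ∧ c ≤ -m) :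
    JT p q c m = Xv q * JT p q c (m - 1) + (1 + bR * Xv q) * JT p (q + 1) c m := by
  have h' : p < q + 1 := by omega
  rcases hm with hm | ⟨hc, hcm⟩
  · rw [JT_eq_zero_of_lt_of_pos h c (by omega : 0 < m),
      JT_eq_zero_of_lt_of_pos h c (by omega : 0 < m - 1), JT_eq_zero_of_lt_of_pos h' c (by omega)]
    ring
  · rw [JT_eq_zero_of_lt_of_le_neg h hc hcm, JT_eq_zero_of_lt_of_le_neg h hc (by omega),
      JT_eq_zero_of_lt_of_le_neg h' hc hcm]
    ring

lemma flag_le_of_mu_lt_lam {r : ℕ} {lam mu f g : Fin r → ℕ}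
    (hlam_anti : ∀ i j : Fin r, i ≤ j → lam j ≤ lam i)
    (hmu_anti : ∀ i j : Fin r, i ≤ j → mu j ≤ mu i)
    (hflag : ∀ (i : Fin r) (h : (i : ℕ) + 1 < r), mu i < lam ⟨(i : ℕ) + 1, h⟩ →
      g i ≤ g ⟨(i : ℕ) + 1, h⟩ ∧ f i ≤ f ⟨(i : ℕ) + 1, h⟩)
    {k i : Fin r} (hki : k ≤ i) (h : mu k < lam i) : f k ≤ f i := by
  obtain ⟨i, hi⟩ := i
  induction i with
  | zero => rw [show k = ⟨0, hi⟩ from Fin.ext (Nat.le_zero.1 hki)]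
  | succ n ih =>
    rcases eq_or_ne k ⟨n + 1, hi⟩ with rfl | hk
    · rfl
    have hn : n < r := by omega
    have hkn : k ≤ ⟨n, hn⟩ :=
      Nat.le_of_lt_succ (lt_of_le_of_ne (Fin.le_def.1 hki) (Fin.val_ne_of_ne hk))
    have hlam : lam ⟨n + 1, hi⟩ ≤ lam ⟨n, hn⟩ := hlam_anti _ _ (Nat.le_succ n)
    exact (ih hn hkn (h.trans_le hlam)).trans
      (hflag ⟨n, hn⟩ hi ((hmu_anti _ _ hkn).trans_lt h)).2

/-- When `f i < g k` the flagging puts the entry into one of the ranges of `JT_rec_of_lt`. -/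
lemma JT_rec_column {r : ℕ} {lam mu f g : Fin r → ℕ}
    (hlam_anti : ∀ i j : Fin r, i ≤ j → lam j ≤ lam i)
    (hmu_anti : ∀ i j : Fin r, i ≤ j → mu j ≤ mu i)
    (hflag : ∀ (i : Fin r) (h : (i : ℕ) + 1 < r), mu i < lam ⟨(i : ℕ) + 1, h⟩ →
      g i ≤ g ⟨(i : ℕ) + 1, h⟩ ∧ f i ≤ f ⟨(i : ℕ) + 1, h⟩)
    {k : Fin r} (hk : mu k < lam k) (hgf : g k ≤ f k) (i : Fin r) :
    JT (f i) (g k) (i - k) (lam i - mu k + k - i) =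
      Xv (g k) * JT (f i) (g k) (i - k) (lam i - mu k + k - i - 1) +
        (1 + bR * Xv (g k)) * JT (f i) (g k + 1) (i - k) (lam i - mu k + k - i) := by
  rcases le_or_gt (g k) (f i) with hle | hlt
  · exact JT_rec hle _ _
  refine JT_rec_of_lt hlt ?_
  rcases lt_trichotomy i k with hik | rfl | hki
  · have := hlam_anti i k hik.le
    have := Fin.lt_def.1 hik
    omega
  · exact absurd hgf (not_le.2 hlt)
  · have hlam : lam i ≤ mu k := not_lt.1 fun h =>
      absurd (flag_le_of_mu_lt_lam hlam_anti hmu_anti hflag hki.le h) (by omega)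
    have := Fin.lt_def.1 hki
    omega

end GrothendieckJT

theorem stmt14_general (r : ℕ) (lam mu f g : Fin r → ℕ)
    (hlam_anti : ∀ i j : Fin r, i ≤ j → lam j ≤ lam i)
    (hmu_anti : ∀ i j : Fin r, i ≤ j → mu j ≤ mu i)
    (hflag : ∀ (i : Fin r) (h : (i : ℕ) + 1 < r), mu i < lam ⟨(i : ℕ) + 1, h⟩ →
      g i ≤ g ⟨(i : ℕ) + 1, h⟩ ∧ f i ≤ f ⟨(i : ℕ) + 1, h⟩)
    (k : Fin r)
    (h1 : mu k < lam k) (h2 : g k ≤ f k) :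
    GtildeSkew r lam mu f g =
      Xv (g k) * GtildeSkew r lam (Function.update mu k (mu k + 1)) f g +
      (1 + bR * Xv (g k)) * GtildeSkew r lam mu f (Function.update g k (g k + 1)) := by
  refine Matrix.det_eq_mul_add_mul_of_col k _ _ (fun i j hj => ?_) (fun i j hj => ?_) fun i => ?_
  · simp only [Matrix.of_apply, Function.update_of_ne hj]
  · simp only [Matrix.of_apply, Function.update_of_ne hj]
  · simp only [Matrix.of_apply, Function.update_self]
    convert GrothendieckJT.JT_rec_column hlam_anti hmu_anti hflag h1 h2 i using 4
    push_cast
    ring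

theorem stmt14 (r : ℕ) (lam mu f g : Fin r → ℕ)
    (hlam_anti : ∀ i j : Fin r, i ≤ j → lam j ≤ lam i) (hlam_pos : ∀ i, 0 < lam i)
    (hmu_anti : ∀ i j : Fin r, i ≤ j → mu j ≤ mu i) (hmule : ∀ i, mu i ≤ lam i)
    (hf_pos : ∀ i, 0 < f i) (hg_pos : ∀ i, 0 < g i)
    (hflag : ∀ (i : Fin r) (h : (i : ℕ) + 1 < r), mu i < lam ⟨(i : ℕ) + 1, h⟩ →
      g i ≤ g ⟨(i : ℕ) + 1, h⟩ ∧ f i ≤ f ⟨(i : ℕ) + 1, h⟩)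
    (k : Fin r)
    (h1 : mu k < lam k) (h2 : g k ≤ f k)
    (h3 : ∀ h : (k : ℕ) + 1 < r, g k < g ⟨(k : ℕ) + 1, h⟩)
    (h4 : ∀ _ : 0 < (k : ℕ),
      mu k < mu ⟨(k : ℕ) - 1, Nat.lt_of_le_of_lt (Nat.sub_le _ _) k.isLt⟩) :
    GtildeSkew r lam mu f g =
      Xv (g k) * GtildeSkew r lam (Function.update mu k (mu k + 1)) f g +
      (1 + bR * Xv (g k)) * GtildeSkew r lam mu f (Function.update g k (g k + 1)) :=
  stmt14_general r lam mu f g hlam_anti hmu_anti hflag k h1 h2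

end
end

section
/- Let λ/μ be a skew shape of length r with flagging f/g, and let 1 ≤ k ≤ r satisfy: μ_k < λ_k, g_k ≤ f_k, (g_k < g_{k+1} or k = r), and (μ_{k−1} > μ_k or k = 1). Let μ' be obtained from μ by replacing μ_k with μ_k + 1, and g' be obtained from g by replacing g_k with g_k + 1 (so f/g is a flagging of λ/μ' and f/g' is a flagging of λ/μ). Then G_{λ/μ,f/g} = x_{g_k}·G_{λ/μ',f/g} + (1+βx_{g_k})·G_{λ/μ,f/g'}. -/
/- Common setup: `R = ℤ[β][[x₀,x₁,x₂,…]]` with `β = Polynomial.X`; only the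
variables `x i` for `i ≥ 1` are used in the statements. -/

attribute [local instance] Classical.propDecidable

noncomputable section

/-! Consider the first box `b = (k, μₖ + 1)` of row `k`. Its entries are at least `gₖ`, the box
above it lies outside the shape (as `μₖ₋₁ > μₖ`), and the entries below it exceed `gₖ`
(as `gₖ < gₖ₊₁`). Split the tableaux according to whether `gₖ ∈ T(b)`. If not, all entries of
row `k` exceed `gₖ`, and these are exactly the tableaux with flagging `f/g'`. If so, deleting
`gₖ` from `T(b)` leaves either an empty box, i.e. a tableau of shape `λ/μ'`, at the cost of a
factor `x_{gₖ}`, or a nonempty one, i.e. a tableau with flagging `f/g'`, at the cost of a factor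
`β x_{gₖ}`; putting `gₖ` back is the inverse. -/

section

variable {r : ℕ} {lam mu f g : Fin r → ℕ} {T U : Fin r × ℕ → Finset ℕ} {k : Fin r}

def skewCells (r : ℕ) (lam mu : Fin r → ℕ) : Finset (Fin r × ℕ) :=
  Finset.univ.biUnion fun i => {i} ×ˢ Finset.Ioc (mu i) (lam i)

lemma mem_skewCells {p : Fin r × ℕ} :
    p ∈ skewCells r lam mu ↔ mu p.1 < p.2 ∧ p.2 ≤ lam p.1 := by
  obtain ⟨i, j⟩ := p
  simp [skewCells]

@[to_additive]
lemma prod_skewCells {M : Type*} [CommMonoid M] (F : Fin r × ℕ → M) :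
    ∏ p ∈ skewCells r lam mu, F p = ∏ i, ∏ j ∈ Finset.Ioc (mu i) (lam i), F (i, j) :=
  Finset.prod_finset_product _ _ _ fun p => by simp [mem_skewCells]

lemma update_succ_lt_iff {i : Fin r} {j : ℕ} :
    Function.update mu k (mu k + 1) i < j ↔ mu i < j ∧ (i, j) ≠ (k, mu k + 1) := by
  by_cases hik : i = k
  · subst hik
    simp only [Function.update_self, ne_eq, Prod.mk.injEq, true_and]
    omega
  · simp [hik]

lemma skewCells_update_succ (k : Fin r) :
    skewCells r lam (Function.update mu k (mu k + 1)) =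
      (skewCells r lam mu).erase (k, mu k + 1) := by
  ext p
  simp only [mem_skewCells, Finset.mem_erase, update_succ_lt_iff]
  tauto

def boxWt (s : Finset ℕ) : R := bR ^ (s.card - 1) * ∏ m ∈ s, Xv m

lemma boxWt_singleton (a : ℕ) : boxWt {a} = Xv a := by
  simp [boxWt]

lemma boxWt_insert {a : ℕ} {s : Finset ℕ} (ha : a ∉ s) (hs : s.Nonempty) :
    boxWt (insert a s) = bR * Xv a * boxWt s := by
  obtain ⟨n, hn⟩ := Nat.exists_eq_add_one.mpr hs.card_pos
  rw [boxWt, boxWt, Finset.card_insert_of_notMem ha, Finset.prod_insert ha, hn]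
  simp only [add_tsub_cancel_right, pow_succ]
  ring

lemma IsFSVT.mem_shape (hT : IsFSVT r lam mu f g T) {i : Fin r} {j a : ℕ} (ha : a ∈ T (i, j)) :
    mu i < j ∧ j ≤ lam i := by
  by_contra h
  simp [hT.1 i j h] at ha

lemma IsFSVT.wt_eq_prod_boxWt (hT : IsFSVT r lam mu f g T) :
    wt r lam mu T = ∏ p ∈ skewCells r lam mu, boxWt (T p) := by
  have hne : ∀ p ∈ skewCells r lam mu, (T p).Nonempty := fun p hp =>
    hT.2.1 p.1 p.2 (mem_skewCells.1 hp).1 (mem_skewCells.1 hp).2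
  have hexp : entriesCount r lam mu T - shapeSize r lam mu =
      ∑ p ∈ skewCells r lam mu, ((T p).card - 1) := by
    rw [Finset.sum_tsub_distrib _ fun p hp => (hne p hp).card_pos, entriesCount, shapeSize,
      sum_skewCells, sum_skewCells]
    simp
  rw [wt, hexp, ← Finset.prod_pow_eq_pow_sum, ← prod_skewCells (F := fun p => ∏ m ∈ T p, Xv m),
    ← Finset.prod_mul_distrib]
  rfl

lemma setOf_isFSVT_finite (r : ℕ) (lam mu f g : Fin r → ℕ) :
    {T | IsFSVT r lam mu f g T}.Finite := by
  let bound : Set (Finset ℕ) := (Finset.range (Finset.univ.sup f + 1)).powerset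
  refine Set.Finite.of_finite_image (f := fun T (p : skewCells r lam mu) => T p) ?_ ?_
  · refine (Set.Finite.pi (t := fun _ => bound) fun _ => Finset.finite_toSet _).subset ?_
    rintro _ ⟨T, hT, rfl⟩ ⟨⟨i, j⟩, hp⟩ -
    simp only [bound, Finset.coe_powerset, Set.mem_preimage, Set.mem_powerset_iff,
      Finset.coe_subset]
    intro m hm
    have := (hT.2.2.1 i j m hm).2
    have := Finset.le_sup (f := f) (Finset.mem_univ i)
    simp only [Finset.mem_range]
    omega
  · intro T hT T' hT' h
    funext ⟨i, j⟩
    by_cases hp : (i, j) ∈ skewCells r lam mu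
    · exact congrFun h ⟨_, hp⟩
    · rw [mem_skewCells] at hp
      rw [hT.1 i j hp, hT'.1 i j hp]

lemma IsFSVT.le_of_mem_of_lt (hT : IsFSVT r lam mu f g T) {i : Fin r} {j j' a c : ℕ}
    (hjj' : j < j') (ha : a ∈ T (i, j)) (hc : c ∈ T (i, j')) : a ≤ c := by
  have hj := (hT.mem_shape ha).1
  have hj' := (hT.mem_shape hc).2
  induction j', hjj' using Nat.le_induction generalizing c with
  | base => exact hT.2.2.2.1 i j hj hj' a ha c hc
  | succ n hn ih =>
    obtain ⟨b, hb⟩ := hT.2.1 i n (by omega) (by omega)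
    exact (ih hb (by omega)).trans (hT.2.2.2.1 i n (by omega) hj' b hb c hc)

lemma IsFSVT.lt_of_mem_of_succ (hT : IsFSVT r lam mu f g T) {i i' : Fin r} (hi : (i' : ℕ) = i + 1)
    {j a c : ℕ} (ha : a ∈ T (i, j)) (hc : c ∈ T (i', j)) : a < c := by
  have h : (i : ℕ) + 1 < r := hi ▸ i'.isLt
  obtain rfl : i' = ⟨i + 1, h⟩ := Fin.ext hi
  exact hT.2.2.2.2 i h j (hT.mem_shape ha).1 (hT.mem_shape ha).2 (hT.mem_shape hc).1
    (hT.mem_shape hc).2 a ha c hc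

lemma IsFSVT.of_le_lower {g₁ : Fin r → ℕ} (hT : IsFSVT r lam mu f g₁ T) (hg : ∀ i, g i ≤ g₁ i) :
    IsFSVT r lam mu f g T :=
  ⟨hT.1, hT.2.1, fun i j m hm => ⟨(hg i).trans (hT.2.2.1 i j m hm).1, (hT.2.2.1 i j m hm).2⟩,
    hT.2.2.2⟩

lemma IsFSVT.update_of_subset (hT : IsFSVT r lam mu f g T) {p : Fin r × ℕ} {s : Finset ℕ}
    (hs : s ⊆ T p) (hne : s.Nonempty) : IsFSVT r lam mu f g (Function.update T p s) := by
  have hsub : ∀ q, Function.update T p s q ⊆ T q := by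
    intro q
    rcases eq_or_ne q p with rfl | hq
    · simpa using hs
    · simp [Function.update_of_ne hq]
  refine ⟨fun i j hij => ?_, fun i j hj hj' => ?_, fun i j m hm => hT.2.2.1 i j m (hsub _ hm),
    fun i j hj hj' a ha c hc => hT.2.2.2.1 i j hj hj' a (hsub _ ha) c (hsub _ hc),
    fun i h j hj₁ hj₂ hj₃ hj₄ a ha c hc =>
      hT.2.2.2.2 i h j hj₁ hj₂ hj₃ hj₄ a (hsub _ ha) c (hsub _ hc)⟩
  · exact Finset.subset_empty.1 (hT.1 i j hij ▸ hsub (i, j))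
  · rcases eq_or_ne (i, j) p with rfl | hq
    · simpa using hne
    · simpa [Function.update_of_ne hq] using hT.2.1 i j hj hj'

lemma IsFSVT.update_corner_empty (hT : IsFSVT r lam mu f g T) (k : Fin r) :
    IsFSVT r lam (Function.update mu k (mu k + 1)) f g (Function.update T (k, mu k + 1) ∅) := by
  have hoff : ∀ {i j}, (i, j) ≠ (k, mu k + 1) →
      Function.update T (k, mu k + 1) ∅ (i, j) = T (i, j) :=
    fun h => Function.update_of_ne h _ _
  refine ⟨fun i j hij => ?_, fun i j hj hj' => ?_, fun i j m hm => ?_,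
    fun i j hj hj' a ha c hc => ?_, fun i h j hj₁ hj₂ hj₃ hj₄ a ha c hc => ?_⟩
  · rcases eq_or_ne (i, j) (k, mu k + 1) with hb | hb
    · simp [hb]
    · rw [update_succ_lt_iff] at hij
      exact (hoff hb).trans (hT.1 i j fun h => hij ⟨⟨h.1, hb⟩, h.2⟩)
  · rw [update_succ_lt_iff] at hj
    exact hoff hj.2 ▸ hT.2.1 i j hj.1 hj'
  · rcases eq_or_ne (i, j) (k, mu k + 1) with hb | hb
    · simp [hb] at hm
    · exact hT.2.2.1 i j m (hoff hb ▸ hm)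
  · have hj₁ := update_succ_lt_iff.1 (Nat.lt_succ_of_lt hj)
    rw [update_succ_lt_iff] at hj
    exact hT.2.2.2.1 i j hj.1 hj' a (hoff hj.2 ▸ ha) c (hoff hj₁.2 ▸ hc)
  · rw [update_succ_lt_iff] at hj₁ hj₃
    exact hT.2.2.2.2 i h j hj₁.1 hj₂ hj₃.1 hj₄ a (hoff hj₁.2 ▸ ha) c (hoff hj₃.2 ▸ hc)

lemma IsFSVT.of_notMem_corner (hT : IsFSVT r lam mu f g T)
    (hk : g k ∉ T (k, mu k + 1)) : IsFSVT r lam mu f (Function.update g k (g k + 1)) T := by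
  refine ⟨hT.1, hT.2.1, fun i j m hm => ?_, hT.2.2.2⟩
  rcases eq_or_ne i k with rfl | hik
  · refine ⟨?_, (hT.2.2.1 i j m hm).2⟩
    rw [Function.update_self]
    obtain ⟨hj, hj'⟩ := hT.mem_shape hm
    obtain ⟨a, ha⟩ := hT.2.1 i (mu i + 1) (by omega) (by omega)
    have hga := (hT.2.2.1 _ _ a ha).1
    have hgm := (hT.2.2.1 _ _ m hm).1
    have hag : a ≠ g i := fun h => hk (h ▸ ha)
    rcases eq_or_lt_of_le (Nat.succ_le_of_lt hj) with rfl | hlt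
    · exact Nat.succ_le_of_lt (lt_of_le_of_ne hgm fun h => hk (h ▸ hm))
    · have := hT.le_of_mem_of_lt hlt ha hm
      omega
  · rw [Function.update_of_ne hik]
    exact hT.2.2.1 i j m hm

lemma isFSVT_update_corner (hk : mu k < lam k)
    (habove : ∀ i : Fin r, (i : ℕ) + 1 = k → mu k < mu i)
    (hU : IsFSVT r lam (Function.update mu k (mu k + 1)) f g U) {s : Finset ℕ}
    (hs : s.Nonempty) (hflag : ∀ a ∈ s, g k ≤ a ∧ a ≤ f k)
    (hrow : ∀ a ∈ s, ∀ c ∈ U (k, mu k + 2), a ≤ c)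
    (hcol : ∀ i : Fin r, (i : ℕ) = k + 1 → ∀ a ∈ s, ∀ c ∈ U (i, mu k + 1), a < c) :
    IsFSVT r lam mu f g (Function.update U (k, mu k + 1) s) := by
  have hoff : ∀ {i j}, (i, j) ≠ (k, mu k + 1) →
      Function.update U (k, mu k + 1) s (i, j) = U (i, j) :=
    fun h => Function.update_of_ne h _ _
  have hshape : ∀ {i j}, (i, j) ≠ (k, mu k + 1) → mu i < j →
      Function.update mu k (mu k + 1) i < j :=
    fun hb hj => update_succ_lt_iff.2 ⟨hj, hb⟩
  refine ⟨fun i j hij => ?_, fun i j hj hj' => ?_, fun i j m hm => ?_,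
    fun i j hj hj' a ha c hc => ?_, fun i h j hj₁ hj₂ hj₃ hj₄ a ha c hc => ?_⟩
  · have hb : (i, j) ≠ (k, mu k + 1) := by
      rintro ⟨⟩
      exact hij ⟨by omega, hk⟩
    exact (hoff hb).trans (hU.1 i j fun h => hij ⟨(update_succ_lt_iff.1 h.1).1, h.2⟩)
  · rcases eq_or_ne (i, j) (k, mu k + 1) with hb | hb
    · simpa [hb] using hs
    · exact hoff hb ▸ hU.2.1 i j (hshape hb hj) hj'
  · rcases eq_or_ne (i, j) (k, mu k + 1) with hb | hb
    · obtain ⟨rfl, rfl⟩ := Prod.mk.inj hb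
      exact hflag m (by simpa using hm)
    · exact hU.2.2.1 i j m (hoff hb ▸ hm)
  · have hb₁ : (i, j + 1) ≠ (k, mu k + 1) := by
      rintro ⟨⟩
      omega
    rw [hoff hb₁] at hc
    rcases eq_or_ne (i, j) (k, mu k + 1) with hb | hb
    · obtain ⟨rfl, rfl⟩ := Prod.mk.inj hb
      exact hrow a (by simpa using ha) c hc
    · exact hU.2.2.2.1 i j (hshape hb hj) hj' a (hoff hb ▸ ha) c hc
  · have hb₁ : ((⟨i + 1, h⟩ : Fin r), j) ≠ (k, mu k + 1) := by
      rintro ⟨⟩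
      have := habove i rfl
      omega
    rw [hoff hb₁] at hc
    rcases eq_or_ne (i, j) (k, mu k + 1) with hb | hb
    · obtain ⟨rfl, rfl⟩ := Prod.mk.inj hb
      exact hcol _ rfl a (by simpa using ha) c hc
    · exact hU.2.2.2.2 i h j (hshape hb hj₁) hj₂ (hshape hb₁ hj₃) hj₄ a (hoff hb ▸ ha) c hc

def addToCell (p : Fin r × ℕ) (a : ℕ) (U : Fin r × ℕ → Finset ℕ) : Fin r × ℕ → Finset ℕ :=
  Function.update U p (insert a (U p))

lemma injOn_addToCell (p : Fin r × ℕ) (a : ℕ) : Set.InjOn (addToCell p a) {U | a ∉ U p} := by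
  refine Set.LeftInvOn.injOn (f₁' := fun T => Function.update T p ((T p).erase a)) fun U hU => ?_
  simp [addToCell, Finset.erase_insert hU]

lemma IsFSVT.wt_update {p : Fin r × ℕ} {s : Finset ℕ}
    (hT : IsFSVT r lam mu f g (Function.update U p s)) (hp : p ∈ skewCells r lam mu) :
    wt r lam mu (Function.update U p s) =
      boxWt s * ∏ q ∈ (skewCells r lam mu).erase p, boxWt (U q) := by
  rw [hT.wt_eq_prod_boxWt, ← Finset.mul_prod_erase _ _ hp, Function.update_self]
  congr 1
  exact Finset.prod_congr rfl fun q hq => by rw [Function.update_of_ne (Finset.ne_of_mem_erase hq)]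

lemma wt_update_corner {f' g' : Fin r → ℕ} (hk : mu k < lam k) {s : Finset ℕ}
    (hT : IsFSVT r lam mu f g (Function.update U (k, mu k + 1) s))
    (hU : IsFSVT r lam (Function.update mu k (mu k + 1)) f' g' U) :
    wt r lam mu (Function.update U (k, mu k + 1) s) =
      boxWt s * wt r lam (Function.update mu k (mu k + 1)) U := by
  rw [hT.wt_update (mem_skewCells.2 ⟨by simp, hk⟩), hU.wt_eq_prod_boxWt, skewCells_update_succ]

lemma wt_addToCell {f' g' : Fin r → ℕ} {p : Fin r × ℕ} {a : ℕ} (hp : p ∈ skewCells r lam mu)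
    (ha : a ∉ U p) (hT : IsFSVT r lam mu f g (addToCell p a U)) (hU : IsFSVT r lam mu f' g' U) :
    wt r lam mu (addToCell p a U) = bR * Xv a * wt r lam mu U := by
  have hne : (U p).Nonempty := hU.2.1 p.1 p.2 (mem_skewCells.1 hp).1 (mem_skewCells.1 hp).2
  rw [addToCell, hT.wt_update hp, boxWt_insert ha hne, hU.wt_eq_prod_boxWt,
    ← Finset.mul_prod_erase _ _ hp]
  ring

lemma le_update_succ (g : Fin r → ℕ) (k i : Fin r) : g i ≤ Function.update g k (g k + 1) i := by
  rcases eq_or_ne i k with rfl | hik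
  · simp
  · simp [Function.update_of_ne hik]

lemma IsFSVT.notMem_of_update_succ (hU : IsFSVT r lam mu f (Function.update g k (g k + 1)) U)
    (j : ℕ) : g k ∉ U (k, j) := fun h => by
  simpa using (hU.2.2.1 k j _ h).1

lemma IsFSVT.corner_eq_empty (hU : IsFSVT r lam (Function.update mu k (mu k + 1)) f g U) :
    U (k, mu k + 1) = ∅ :=
  hU.1 k _ fun h => by simp at h

lemma IsFSVT.addToCell_of_update_mu (hU : IsFSVT r lam (Function.update mu k (mu k + 1)) f g U)
    (hk : mu k < lam k) (hgf : g k ≤ f k) (habove : ∀ i : Fin r, (i : ℕ) + 1 = k → mu k < mu i)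
    (hbelow : ∀ i : Fin r, (i : ℕ) = k + 1 → g k < g i) :
    IsFSVT r lam mu f g (addToCell (k, mu k + 1) (g k) U) := by
  rw [addToCell, hU.corner_eq_empty, insert_empty_eq]
  refine isFSVT_update_corner hk habove hU (Finset.singleton_nonempty _) ?_ ?_ ?_ <;>
    simp only [Finset.mem_singleton, forall_eq]
  · exact ⟨le_rfl, hgf⟩
  · exact fun c hc => (hU.2.2.1 _ _ c hc).1
  · exact fun i hi c hc => (hbelow i hi).trans_le (hU.2.2.1 _ _ c hc).1

lemma IsFSVT.addToCell_of_update_g (hU : IsFSVT r lam mu f (Function.update g k (g k + 1)) U)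
    (hk : mu k < lam k) (hgf : g k ≤ f k) (habove : ∀ i : Fin r, (i : ℕ) + 1 = k → mu k < mu i)
    (hbelow : ∀ i : Fin r, (i : ℕ) = k + 1 → g k < g i) :
    IsFSVT r lam mu f g (addToCell (k, mu k + 1) (g k) U) := by
  have hoff : ∀ {i j}, (i, j) ≠ (k, mu k + 1) →
      Function.update U (k, mu k + 1) ∅ (i, j) = U (i, j) :=
    fun h => Function.update_of_ne h _ _
  have hU₀ := hU.of_le_lower (le_update_succ g k)
  have := isFSVT_update_corner hk habove (hU₀.update_corner_empty k)
    (s := insert (g k) (U (k, mu k + 1))) (Finset.insert_nonempty _ _) ?_ ?_ ?_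
  · rwa [Function.update_idem] at this
  · refine Finset.forall_mem_insert _ _ _ |>.2 ⟨⟨le_rfl, hgf⟩, fun a ha => ?_⟩
    simpa using hU₀.2.2.1 _ _ a ha
  · intro a ha c hc
    rw [hoff (by simp)] at hc
    rcases Finset.mem_insert.1 ha with rfl | ha
    · exact (hU₀.2.2.1 _ _ c hc).1
    · exact hU.le_of_mem_of_lt (by omega) ha hc
  · intro i hi a ha c hc
    rw [hoff (by rintro ⟨⟩; omega)] at hc
    rcases Finset.mem_insert.1 ha with rfl | ha
    · exact (hbelow i hi).trans_le (hU₀.2.2.1 _ _ c hc).1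
    · exact hU.lt_of_mem_of_succ hi ha hc

lemma GF_eq_finsum_mem (r : ℕ) (lam mu f g : Fin r → ℕ) :
    GF r lam mu f g = ∑ᶠ T ∈ {T | IsFSVT r lam mu f g T}, wt r lam mu T :=
  rfl

lemma setOf_isFSVT_inter_mem_corner (hk : mu k < lam k) (hgf : g k ≤ f k)
    (habove : ∀ i : Fin r, (i : ℕ) + 1 = k → mu k < mu i)
    (hbelow : ∀ i : Fin r, (i : ℕ) = k + 1 → g k < g i) :
    {T | IsFSVT r lam mu f g T} ∩ {T | g k ∈ T (k, mu k + 1)} =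
      addToCell (k, mu k + 1) (g k) ''
        ({U | IsFSVT r lam (Function.update mu k (mu k + 1)) f g U} ∪
          {U | IsFSVT r lam mu f (Function.update g k (g k + 1)) U}) := by
  ext T
  constructor
  · rintro ⟨hT, hgT⟩
    refine ⟨Function.update T (k, mu k + 1) ((T (k, mu k + 1)).erase (g k)), ?_,
      by simp [addToCell, Finset.insert_erase hgT]⟩
    rcases ((T (k, mu k + 1)).erase (g k)).eq_empty_or_nonempty with he | hne
    · exact Or.inl (he ▸ hT.update_corner_empty k)
    · exact Or.inr ((hT.update_of_subset (Finset.erase_subset _ _) hne).of_notMem_corner (by simp))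
  · rintro ⟨U, hU | hU, rfl⟩
    · exact ⟨hU.addToCell_of_update_mu hk hgf habove hbelow, by simp [addToCell]⟩
    · exact ⟨hU.addToCell_of_update_g hk hgf habove hbelow, by simp [addToCell]⟩

lemma setOf_isFSVT_sdiff_mem_corner :
    {T | IsFSVT r lam mu f g T} \ {T | g k ∈ T (k, mu k + 1)} =
      {T | IsFSVT r lam mu f (Function.update g k (g k + 1)) T} := by
  ext T
  exact ⟨fun ⟨hT, hgT⟩ => hT.of_notMem_corner hgT,
    fun hT => ⟨hT.of_le_lower (le_update_succ g k), hT.notMem_of_update_succ _⟩⟩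

lemma disjoint_setOf_isFSVT_update (hk : mu k < lam k) :
    Disjoint {U | IsFSVT r lam (Function.update mu k (mu k + 1)) f g U}
      {U | IsFSVT r lam mu f (Function.update g k (g k + 1)) U} :=
  Set.disjoint_left.2 fun U hU hU' => by
    simpa [IsFSVT.corner_eq_empty hU] using hU'.2.1 k (mu k + 1) (by omega) (by omega)

lemma injOn_addToCell_setOf_isFSVT_update :
    Set.InjOn (addToCell (k, mu k + 1) (g k))
      ({U | IsFSVT r lam (Function.update mu k (mu k + 1)) f g U} ∪
        {U | IsFSVT r lam mu f (Function.update g k (g k + 1)) U}) :=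
  (injOn_addToCell _ _).mono fun U hU => hU.elim
    (fun hU => show g k ∉ U (k, mu k + 1) by simp [IsFSVT.corner_eq_empty hU])
    fun hU => IsFSVT.notMem_of_update_succ hU _

lemma finsum_wt_addToCell_of_update_mu (hk : mu k < lam k) (hgf : g k ≤ f k)
    (habove : ∀ i : Fin r, (i : ℕ) + 1 = k → mu k < mu i)
    (hbelow : ∀ i : Fin r, (i : ℕ) = k + 1 → g k < g i) :
    ∑ᶠ U ∈ {U | IsFSVT r lam (Function.update mu k (mu k + 1)) f g U},
        wt r lam mu (addToCell (k, mu k + 1) (g k) U) =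
      Xv (g k) * GF r lam (Function.update mu k (mu k + 1)) f g := by
  rw [GF_eq_finsum_mem, mul_finsum_mem]
  refine finsum_mem_congr rfl fun U (hU : IsFSVT _ _ _ _ _ U) => ?_
  have hT := hU.addToCell_of_update_mu hk hgf habove hbelow
  rw [addToCell] at hT ⊢
  rw [wt_update_corner hk hT hU, hU.corner_eq_empty, insert_empty_eq, boxWt_singleton]

lemma finsum_wt_addToCell_of_update_g (hk : mu k < lam k) (hgf : g k ≤ f k)
    (habove : ∀ i : Fin r, (i : ℕ) + 1 = k → mu k < mu i)
    (hbelow : ∀ i : Fin r, (i : ℕ) = k + 1 → g k < g i) :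
    ∑ᶠ U ∈ {U | IsFSVT r lam mu f (Function.update g k (g k + 1)) U},
        wt r lam mu (addToCell (k, mu k + 1) (g k) U) =
      bR * Xv (g k) * GF r lam mu f (Function.update g k (g k + 1)) := by
  rw [GF_eq_finsum_mem, mul_finsum_mem]
  exact finsum_mem_congr rfl fun U (hU : IsFSVT _ _ _ _ _ U) =>
    wt_addToCell (mem_skewCells.2 ⟨by simp, hk⟩) (hU.notMem_of_update_succ _)
      (hU.addToCell_of_update_g hk hgf habove hbelow) hU

end

theorem stmt15_general (r : ℕ) (lam mu f g : Fin r → ℕ) (k : Fin r)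
    (h1 : mu k < lam k) (h2 : g k ≤ f k)
    (h3 : ∀ h : (k : ℕ) + 1 < r, g k < g ⟨(k : ℕ) + 1, h⟩)
    (h4 : ∀ _ : 0 < (k : ℕ),
      mu k < mu ⟨(k : ℕ) - 1, Nat.lt_of_le_of_lt (Nat.sub_le _ _) k.isLt⟩) :
    GF r lam mu f g =
      Xv (g k) * GF r lam (Function.update mu k (mu k + 1)) f g +
      (1 + bR * Xv (g k)) * GF r lam mu f (Function.update g k (g k + 1)) := by
  have habove : ∀ i : Fin r, (i : ℕ) + 1 = k → mu k < mu i := fun i hi => by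
    have := h4 (by omega)
    rwa [show (⟨(k : ℕ) - 1, _⟩ : Fin r) = i from Fin.ext (by simp only; omega)] at this
  have hbelow : ∀ i : Fin r, (i : ℕ) = k + 1 → g k < g i := fun i hi => by
    have := h3 (by omega)
    rwa [show (⟨(k : ℕ) + 1, _⟩ : Fin r) = i from Fin.ext hi.symm] at this
  rw [GF_eq_finsum_mem, ← finsum_mem_inter_add_sdiff _ (setOf_isFSVT_finite r lam mu f g),
    setOf_isFSVT_inter_mem_corner h1 h2 habove hbelow,
    finsum_mem_image injOn_addToCell_setOf_isFSVT_update,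
    finsum_mem_union (disjoint_setOf_isFSVT_update h1) (setOf_isFSVT_finite _ _ _ _ _)
      (setOf_isFSVT_finite _ _ _ _ _),
    finsum_wt_addToCell_of_update_mu h1 h2 habove hbelow,
    finsum_wt_addToCell_of_update_g h1 h2 habove hbelow, setOf_isFSVT_sdiff_mem_corner,
    ← GF_eq_finsum_mem]
  ring

theorem stmt15 (r : ℕ) (lam mu f g : Fin r → ℕ)
    (hlam_anti : ∀ i j : Fin r, i ≤ j → lam j ≤ lam i) (hlam_pos : ∀ i, 0 < lam i)
    (hmu_anti : ∀ i j : Fin r, i ≤ j → mu j ≤ mu i) (hmule : ∀ i, mu i ≤ lam i)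
    (hf_pos : ∀ i, 0 < f i) (hg_pos : ∀ i, 0 < g i)
    (hflag : ∀ (i : Fin r) (h : (i : ℕ) + 1 < r), mu i < lam ⟨(i : ℕ) + 1, h⟩ →
      g i ≤ g ⟨(i : ℕ) + 1, h⟩ ∧ f i ≤ f ⟨(i : ℕ) + 1, h⟩)
    (k : Fin r)
    (h1 : mu k < lam k) (h2 : g k ≤ f k)
    (h3 : ∀ h : (k : ℕ) + 1 < r, g k < g ⟨(k : ℕ) + 1, h⟩)
    (h4 : ∀ _ : 0 < (k : ℕ),
      mu k < mu ⟨(k : ℕ) - 1, Nat.lt_of_le_of_lt (Nat.sub_le _ _) k.isLt⟩) :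
    GF r lam mu f g =
      Xv (g k) * GF r lam (Function.update mu k (mu k + 1)) f g +
      (1 + bR * Xv (g k)) * GF r lam mu f (Function.update g k (g k + 1)) :=
  stmt15_general r lam mu f g k h1 h2 h3 h4

end
end
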